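/- arXiv:2603.18727 — 2 statements merged into one kernel-verified Lean document; each statement's English description precedes it below -/
import Mathlib

section
/- Let M ∈ ℂ^{K×K} be Hermitian positive definite and b ∈ ℂ^K. The complex conjugate gradient method started from any x_0 terminates with the exact minimizer of f(x) = x^H M x + b^H x + x^H b (equivalently, with M x + b = 0) after at most K iterations: there exists m ≤ K with r_m = 0. -/
/-!
As long as the residuals `r 0, …, r (m - 1)` are nonzero, induction on `m` shows that every
earlier direction `p i` is orthogonal to `r m` and `M`-conjugate to `p m`. Since `r i` lies in the
span of `p 0, …, p i`, the residuals are then pairwise orthogonal. The inductive step rests on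
`M p i = (r (i + 1) - r i) / α i`, where `α i ≠ 0` because `p iᴴ r i = r iᴴ r i`. Finally,
`K + 1` nonzero pairwise orthogonal vectors cannot exist in `ℂ^K`.
-/

open Matrix
open scoped ComplexOrder

namespace Matrix

variable {𝕜 n : Type*} [RCLike 𝕜] [Fintype n]

theorem IsHermitian.star_dotProduct_mulVec {M : Matrix n n 𝕜} (hM : M.IsHermitian)
    (u v : n → 𝕜) :
    star u ⬝ᵥ M *ᵥ v = star (M *ᵥ u) ⬝ᵥ v := by
  rw [star_mulVec, dotProduct_mulVec, hM]

theorem card_le_of_pairwise_star_dotProduct_eq_zero {ι : Type*} [Fintype ι] {v : ι → n → 𝕜}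
    (hv : ∀ i, v i ≠ 0) (hvv : Pairwise fun i j ↦ star (v i) ⬝ᵥ v j = 0) :
    Fintype.card ι ≤ Fintype.card n := by
  have hli : LinearIndependent 𝕜 fun i ↦ WithLp.toLp 2 (v i) :=
    linearIndependent_of_ne_zero_of_inner_eq_zero (by simpa using hv) fun i j hij ↦
      (EuclideanSpace.inner_toLp_toLp _ _).trans (by rw [dotProduct_comm, hvv hij])
  simpa using hli.fintype_card_le_finrank

structure IsCGIteration (M : Matrix n n 𝕜) (r p : ℕ → n → 𝕜) (α β : ℕ → 𝕜) : Prop where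
  p_zero : p 0 = r 0
  α_eq : ∀ k, α k = -(star (p k) ⬝ᵥ r k) / (star (p k) ⬝ᵥ M *ᵥ p k)
  r_succ : ∀ k, r (k + 1) = r k + α k • M *ᵥ p k
  β_succ : ∀ k, β (k + 1) = -(star (M *ᵥ p k) ⬝ᵥ r (k + 1)) / (star (p k) ⬝ᵥ M *ᵥ p k)
  p_succ : ∀ k, p (k + 1) = r (k + 1) + β (k + 1) • p k

namespace IsCGIteration

variable {M : Matrix n n 𝕜} {r p : ℕ → n → 𝕜} {α β : ℕ → 𝕜}

theorem star_r_dotProduct_eq_zero (h : IsCGIteration M r p α β) {v : n → 𝕜} :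
    ∀ {i}, (∀ j ≤ i, star (p j) ⬝ᵥ v = 0) → star (r i) ⬝ᵥ v = 0
  | 0, hv => by rw [← h.p_zero, hv 0 le_rfl]
  | i + 1, hv => by
    rw [eq_sub_of_add_eq (h.p_succ i).symm, star_sub, sub_dotProduct, star_smul, smul_dotProduct,
      hv i (by omega), hv (i + 1) le_rfl, smul_zero, sub_zero]

variable (h : IsCGIteration M r p α β) (hM : M.PosDef)
include h hM

theorem star_p_dotProduct_r_succ (k : ℕ) : star (p k) ⬝ᵥ r (k + 1) = 0 := by
  by_cases hp : p k = 0
  · simp [hp]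
  have hpMp := (hM.dotProduct_mulVec_pos hp).ne'
  rw [h.r_succ, dotProduct_add, dotProduct_smul, h.α_eq, smul_eq_mul]
  field_simp
  ring

theorem star_p_dotProduct_mulVec_p_succ (k : ℕ) : star (p k) ⬝ᵥ M *ᵥ p (k + 1) = 0 := by
  by_cases hp : p k = 0
  · simp [hp]
  have hpMp := (hM.dotProduct_mulVec_pos hp).ne'
  rw [h.p_succ, mulVec_add, mulVec_smul, dotProduct_add, dotProduct_smul, h.β_succ,
    hM.isHermitian.star_dotProduct_mulVec, smul_eq_mul]
  field_simp
  ring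

theorem star_p_dotProduct_r_self : ∀ k, star (p k) ⬝ᵥ r k = star (r k) ⬝ᵥ r k
  | 0 => by rw [h.p_zero]
  | k + 1 => by
    rw [h.p_succ, star_add, star_smul, add_dotProduct, smul_dotProduct,
      h.star_p_dotProduct_r_succ hM, smul_zero, add_zero]

theorem α_ne_zero {k : ℕ} (hr : r k ≠ 0) : α k ≠ 0 := by
  have hrr : star (r k) ⬝ᵥ r k ≠ 0 := dotProduct_star_self_eq_zero.not.mpr hr
  have hp : p k ≠ 0 := by
    rintro hp
    simp [← h.star_p_dotProduct_r_self hM, hp] at hrr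
  rw [h.α_eq, h.star_p_dotProduct_r_self hM]
  exact div_ne_zero (neg_ne_zero.mpr hrr) (hM.dotProduct_mulVec_pos hp).ne'

theorem star_mulVec_p_dotProduct_eq_zero {i : ℕ} {v : n → 𝕜} (hr : r i ≠ 0)
    (hv : star (r i) ⬝ᵥ v = 0) (hv' : star (r (i + 1)) ⬝ᵥ v = 0) :
    star (M *ᵥ p i) ⬝ᵥ v = 0 := by
  rw [h.r_succ, star_add, star_smul, add_dotProduct, smul_dotProduct, hv, zero_add,
    smul_eq_mul] at hv'
  exact (mul_eq_zero.mp hv').resolve_left (star_ne_zero.mpr (h.α_ne_zero hM hr))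

theorem p_orthogonal_r_and_conjugate_p_of_lt :
    ∀ {m}, (∀ k < m, r k ≠ 0) → ∀ i < m,
      star (p i) ⬝ᵥ r m = 0 ∧ star (p i) ⬝ᵥ M *ᵥ p m = 0
  | 0, _ => by simp
  | m + 1, hr => by
    have ih := p_orthogonal_r_and_conjugate_p_of_lt (m := m) fun k hk ↦ hr k (by omega)
    have hpr : ∀ i < m + 1, star (p i) ⬝ᵥ r (m + 1) = 0 := by
      intro i hi
      obtain hi | rfl := Nat.lt_succ_iff_lt_or_eq.mp hi
      · rw [h.r_succ, dotProduct_add, dotProduct_smul, (ih i hi).1, (ih i hi).2, smul_zero,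
          add_zero]
      · exact h.star_p_dotProduct_r_succ hM i
    refine fun i hi ↦ ⟨hpr i hi, ?_⟩
    obtain hi | rfl := Nat.lt_succ_iff_lt_or_eq.mp hi
    · have hMp : star (M *ᵥ p i) ⬝ᵥ r (m + 1) = 0 :=
        h.star_mulVec_p_dotProduct_eq_zero hM (hr i (by omega))
          (h.star_r_dotProduct_eq_zero fun j hj ↦ hpr j (by omega))
          (h.star_r_dotProduct_eq_zero fun j hj ↦ hpr j (by omega))
      rw [h.p_succ, mulVec_add, mulVec_smul, dotProduct_add, dotProduct_smul, (ih i hi).2,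
        smul_zero, add_zero, hM.isHermitian.star_dotProduct_mulVec, hMp]
    · exact h.star_p_dotProduct_mulVec_p_succ hM i

theorem star_r_dotProduct_r_of_lt {i j : ℕ} (hr : ∀ k < j, r k ≠ 0) (hij : i < j) :
    star (r i) ⬝ᵥ r j = 0 :=
  h.star_r_dotProduct_eq_zero fun l hl ↦
    (h.p_orthogonal_r_and_conjugate_p_of_lt hM hr l (by omega)).1

theorem exists_le_card_r_eq_zero : ∃ m ≤ Fintype.card n, r m = 0 := by
  by_contra! hr
  have hlt := card_le_of_pairwise_star_dotProduct_eq_zero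
    (v := fun i : Fin (Fintype.card n + 1) ↦ r i) (fun i ↦ hr i (by omega)) fun i j hij ↦ ?_
  · simp at hlt
  rcases lt_or_gt_of_ne hij with hij | hij
  · exact h.star_r_dotProduct_r_of_lt hM (fun k hk ↦ hr k (by omega)) hij
  · rw [star_dotProduct, h.star_r_dotProduct_r_of_lt hM (fun k hk ↦ hr k (by omega)) hij,
      star_zero]

end IsCGIteration

end Matrix

theorem stmt_9_general (K : ℕ) (M : Matrix (Fin K) (Fin K) ℂ) (hM : M.PosDef)
    (r p : ℕ → (Fin K → ℂ)) (α β : ℕ → ℂ)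
    (hp0 : p 0 = r 0)
    (hα : ∀ k, α k = -(star (p k) ⬝ᵥ r k) / (star (p k) ⬝ᵥ M.mulVec (p k)))
    (hr : ∀ k, r (k + 1) = r k + α k • M.mulVec (p k))
    (hβ : ∀ k, β (k + 1) = -(star (M.mulVec (p k)) ⬝ᵥ r (k + 1)) / (star (p k) ⬝ᵥ M.mulVec (p k)))
    (hp : ∀ k, p (k + 1) = r (k + 1) + β (k + 1) • p k) :
    ∃ m ≤ K, r m = 0 := by
  simpa using (IsCGIteration.mk hp0 hα hr hβ hp).exists_le_card_r_eq_zero hM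

theorem stmt_9 (K : ℕ) (M : Matrix (Fin K) (Fin K) ℂ) (hM : M.PosDef)
    (b x0 : Fin K → ℂ)
    (x r p : ℕ → (Fin K → ℂ)) (α β : ℕ → ℂ)
    (hx0 : x 0 = x0)
    (hr0 : r 0 = M.mulVec x0 + b)
    (hp0 : p 0 = r 0)
    (hα : ∀ k, α k = -(star (p k) ⬝ᵥ r k) / (star (p k) ⬝ᵥ M.mulVec (p k)))
    (hx : ∀ k, x (k + 1) = x k + α k • p k)
    (hr : ∀ k, r (k + 1) = r k + α k • M.mulVec (p k))
    (hβ : ∀ k, β (k + 1) = -(star (M.mulVec (p k)) ⬝ᵥ r (k + 1)) / (star (p k) ⬝ᵥ M.mulVec (p k)))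
    (hp : ∀ k, p (k + 1) = r (k + 1) + β (k + 1) • p k) :
    ∃ m ≤ K, r m = 0 :=
  stmt_9_general K M hM r p α β hp0 hα hr hβ hp
end

section
/- Let M ∈ ℂ^{K×K} be Hermitian positive semidefinite of rank R, and suppose b lies in the column space of M. Then the complex conjugate gradient method started from x_0 = 0 reaches a point x with M x + b = 0 after at most R iterations. -/
open Matrix
open scoped ComplexOrder

/-!
As long as no residual vanishes, the residuals and directions stay in `range M` (the iteration only
adds multiples of `b` and of vectors `M p`), so every denominator `pₖᴴ M pₖ` is nonzero: a PSD `M`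
has `uᴴ M u = 0` only for `u ∈ ker M`, which meets `range M` trivially. The usual induction then
shows `pᵢᴴ rⱼ = 0` and `pᵢᴴ M pⱼ = 0` for `i < j`, whence the residuals are mutually orthogonal.
Nonzero orthogonal vectors `r₀, …, r_R` in the `R`-dimensional space `range M` cannot exist, so
some `r_m` with `m ≤ R` vanishes, and `r_m = M x_m + b`.
-/

variable {𝕜 n : Type*} [RCLike 𝕜] [Fintype n]

namespace Matrix

lemma IsHermitian.star_mulVec_dotProduct {M : Matrix n n 𝕜} (hM : M.IsHermitian) (u w : n → 𝕜) :
    star (M *ᵥ u) ⬝ᵥ w = star u ⬝ᵥ M *ᵥ w := by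
  rw [star_mulVec, hM.eq, ← dotProduct_mulVec]

lemma PosSemidef.eq_zero_of_mem_range_of_star_dotProduct_mulVec_eq_zero {M : Matrix n n 𝕜}
    (hM : M.PosSemidef) {u : n → 𝕜} (hu : u ∈ LinearMap.range M.mulVecLin)
    (h : star u ⬝ᵥ M *ᵥ u = 0) : u = 0 := by
  obtain ⟨w, rfl⟩ := hu
  rw [mulVecLin_apply] at h ⊢
  rw [← dotProduct_star_self_eq_zero, hM.isHermitian.star_mulVec_dotProduct,
    (hM.dotProduct_mulVec_zero_iff _).mp h, dotProduct_zero]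

lemma linearIndependent_of_ne_zero_of_star_dotProduct_eq_zero {ι : Type*} {v : ι → n → 𝕜}
    (hz : ∀ i, v i ≠ 0) (ho : Pairwise fun i j => star (v i) ⬝ᵥ v j = 0) :
    LinearIndependent 𝕜 v := by
  have hE : LinearIndependent 𝕜 fun i => WithLp.toLp 2 (v i) :=
    linearIndependent_of_ne_zero_of_inner_eq_zero (by simpa using hz) fun i j hij => by
      dsimp only
      rw [EuclideanSpace.inner_toLp_toLp, dotProduct_comm, ho hij]
  exact hE.map' (WithLp.linearEquiv 2 𝕜 (n → 𝕜)).toLinearMap (LinearEquiv.ker _)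

end Matrix

structure IsConjugateGradient (M : Matrix n n 𝕜) (b : n → 𝕜) (x r p : ℕ → n → 𝕜)
    (α β : ℕ → 𝕜) : Prop where
  x_zero : x 0 = 0
  r_zero : r 0 = b
  p_zero : p 0 = r 0
  α_eq : ∀ k, α k = -(star (p k) ⬝ᵥ r k) / (star (p k) ⬝ᵥ M *ᵥ p k)
  x_succ : ∀ k, x (k + 1) = x k + α k • p k
  r_succ : ∀ k, r (k + 1) = r k + α k • M *ᵥ p k
  β_succ : ∀ k, β (k + 1) = -(star (M *ᵥ p k) ⬝ᵥ r (k + 1)) / (star (p k) ⬝ᵥ M *ᵥ p k)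
  p_succ : ∀ k, p (k + 1) = r (k + 1) + β (k + 1) • p k

namespace IsConjugateGradient

variable {M : Matrix n n 𝕜} {b : n → 𝕜} {x r p : ℕ → n → 𝕜} {α β : ℕ → 𝕜}

lemma residual_eq (h : IsConjugateGradient M b x r p α β) (k : ℕ) : r k = M *ᵥ x k + b := by
  induction k with
  | zero => rw [h.r_zero, h.x_zero, mulVec_zero, zero_add]
  | succ k ih => rw [h.r_succ, h.x_succ, mulVec_add, mulVec_smul, ih, add_right_comm]

lemma residual_mem_range (h : IsConjugateGradient M b x r p α β)
    (hb : b ∈ LinearMap.range M.mulVecLin) (k : ℕ) : r k ∈ LinearMap.range M.mulVecLin := by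
  induction k with
  | zero => rwa [h.r_zero]
  | succ k ih => rw [h.r_succ]; exact add_mem ih (Submodule.smul_mem _ _ ⟨p k, rfl⟩)

lemma direction_mem_range (h : IsConjugateGradient M b x r p α β)
    (hb : b ∈ LinearMap.range M.mulVecLin) (k : ℕ) : p k ∈ LinearMap.range M.mulVecLin := by
  induction k with
  | zero => rw [h.p_zero]; exact h.residual_mem_range hb 0
  | succ k ih =>
    rw [h.p_succ]; exact add_mem (h.residual_mem_range hb _) (Submodule.smul_mem _ _ ih)

lemma star_direction_dotProduct_residual_self (h : IsConjugateGradient M b x r p α β) {k : ℕ}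
    (hk : ∀ i < k, star (p i) ⬝ᵥ r k = 0) : star (p k) ⬝ᵥ r k = star (r k) ⬝ᵥ r k := by
  cases k with
  | zero => rw [h.p_zero]
  | succ k =>
    rw [h.p_succ, star_add, add_dotProduct, star_smul, smul_dotProduct, hk k k.lt_succ_self,
      smul_zero, add_zero]

lemma star_residual_dotProduct_residual (h : IsConjugateGradient M b x r p α β) {i j : ℕ}
    (hj : ∀ l < j, star (p l) ⬝ᵥ r j = 0) (hij : i < j) : star (r i) ⬝ᵥ r j = 0 := by
  cases i with
  | zero => rw [← h.p_zero, hj 0 hij]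
  | succ i =>
    have hr : r (i + 1) = p (i + 1) - β (i + 1) • p i := by rw [h.p_succ, add_sub_cancel_right]
    rw [hr, star_sub, sub_dotProduct, star_smul, smul_dotProduct, hj _ hij, hj i (by omega),
      smul_zero, sub_zero]

lemma star_direction_dotProduct_mulVec_ne_zero (h : IsConjugateGradient M b x r p α β) (hM : M.PosSemidef)
    (hb : b ∈ LinearMap.range M.mulVecLin) {k : ℕ} (hr : r k ≠ 0)
    (hk : ∀ i < k, star (p i) ⬝ᵥ r k = 0) : star (p k) ⬝ᵥ M *ᵥ p k ≠ 0 := by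
  intro hzero
  have hp := hM.eq_zero_of_mem_range_of_star_dotProduct_mulVec_eq_zero
    (h.direction_mem_range hb k) hzero
  apply hr
  rw [← dotProduct_star_self_eq_zero, ← h.star_direction_dotProduct_residual_self hk, hp,
    star_zero, zero_dotProduct]

lemma step_ne_zero (h : IsConjugateGradient M b x r p α β) (hM : M.PosSemidef)
    (hb : b ∈ LinearMap.range M.mulVecLin) {k : ℕ} (hr : r k ≠ 0)
    (hk : ∀ i < k, star (p i) ⬝ᵥ r k = 0) : α k ≠ 0 := by
  rw [h.α_eq, h.star_direction_dotProduct_residual_self hk]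
  exact div_ne_zero (neg_ne_zero.2 (mt dotProduct_star_self_eq_zero.mp hr))
    (h.star_direction_dotProduct_mulVec_ne_zero hM hb hr hk)

lemma star_direction_dotProduct_residual_succ (h : IsConjugateGradient M b x r p α β) {k : ℕ}
    (hr : ∀ i < k, star (p i) ⬝ᵥ r k = 0) (hMp : ∀ i < k, star (p i) ⬝ᵥ M *ᵥ p k = 0)
    (hd : star (p k) ⬝ᵥ M *ᵥ p k ≠ 0) : ∀ i ≤ k, star (p i) ⬝ᵥ r (k + 1) = 0 := by
  intro i hi
  rw [h.r_succ, dotProduct_add, dotProduct_smul]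
  rcases hi.eq_or_lt with rfl | hi
  · rw [h.α_eq, smul_eq_mul, div_mul_cancel₀ _ hd, add_neg_cancel]
  · rw [hr i hi, hMp i hi, smul_zero, add_zero]

lemma star_direction_dotProduct_mulVec_direction_succ (h : IsConjugateGradient M b x r p α β)
    (hM : M.IsHermitian) {k : ℕ} (hMp : ∀ i < k, star (p i) ⬝ᵥ M *ᵥ p k = 0)
    (hr : ∀ i ≤ k, star (p i) ⬝ᵥ r (k + 1) = 0) (hα : ∀ i < k, α i ≠ 0)
    (hd : star (p k) ⬝ᵥ M *ᵥ p k ≠ 0) : ∀ i ≤ k, star (p i) ⬝ᵥ M *ᵥ p (k + 1) = 0 := by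
  intro i hi
  rw [h.p_succ, mulVec_add, mulVec_smul, dotProduct_add, dotProduct_smul,
    ← hM.star_mulVec_dotProduct]
  rcases hi.eq_or_lt with rfl | hi
  · rw [h.β_succ, smul_eq_mul, div_mul_cancel₀ _ hd, add_neg_cancel]
  · rw [hMp i hi, smul_zero, add_zero]
    have hres : ∀ j ≤ k, star (r j) ⬝ᵥ r (k + 1) = 0 := fun j hj =>
      h.star_residual_dotProduct_residual (fun l hl => hr l (by omega)) (by omega)
    -- `α i • M p i = r (i + 1) - r i` is orthogonal to `r (k + 1)`, and `α i ≠ 0`.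
    have hstep : star (α i • M *ᵥ p i) ⬝ᵥ r (k + 1) = 0 := by
      rw [show α i • M *ᵥ p i = r (i + 1) - r i by rw [h.r_succ, add_sub_cancel_left],
        star_sub, sub_dotProduct, hres _ hi, hres _ hi.le, sub_zero]
    rw [star_smul, smul_dotProduct, smul_eq_zero] at hstep
    exact hstep.resolve_left (star_ne_zero.2 (hα i hi))

lemma orthogonal (h : IsConjugateGradient M b x r p α β) (hM : M.PosSemidef)
    (hb : b ∈ LinearMap.range M.mulVecLin) {k : ℕ} (hr : ∀ j < k, r j ≠ 0) :
    ∀ j ≤ k, ∀ i < j, star (p i) ⬝ᵥ r j = 0 ∧ star (p i) ⬝ᵥ M *ᵥ p j = 0 := by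
  induction k with
  | zero => intro j hj i hi; omega
  | succ k ih =>
    have H := ih fun j hj => hr j (by omega)
    have hrk : ∀ i < k, star (p i) ⬝ᵥ r k = 0 := fun i hi => (H k le_rfl i hi).1
    have hMk : ∀ i < k, star (p i) ⬝ᵥ M *ᵥ p k = 0 := fun i hi => (H k le_rfl i hi).2
    have hd := h.star_direction_dotProduct_mulVec_ne_zero hM hb (hr k k.lt_succ_self) hrk
    have hα : ∀ i < k, α i ≠ 0 := fun i hi =>
      h.step_ne_zero hM hb (hr i (by omega)) fun l hl => (H i hi.le l hl).1
    have hr' := h.star_direction_dotProduct_residual_succ hrk hMk hd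
    have hMp' := h.star_direction_dotProduct_mulVec_direction_succ hM.isHermitian hMk hr' hα hd
    intro j hj i hi
    rcases Nat.le_succ_iff.1 hj with hj | rfl
    · exact H j hj i hi
    · exact ⟨hr' i (by omega), hMp' i (by omega)⟩

lemma exists_residual_eq_zero (h : IsConjugateGradient M b x r p α β) (hM : M.PosSemidef)
    (hb : b ∈ LinearMap.range M.mulVecLin) : ∃ m ≤ M.rank, r m = 0 := by
  by_contra! hne
  have horth := h.orthogonal hM hb fun j hj => hne j hj.le
  have hres : ∀ i j : Fin (M.rank + 1), i < j → star (r i) ⬝ᵥ r j = 0 := fun i j hij =>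
    h.star_residual_dotProduct_residual (fun l hl => (horth j j.is_le l hl).1) hij
  have hli : LinearIndependent 𝕜 fun i : Fin (M.rank + 1) => r i := by
    refine linearIndependent_of_ne_zero_of_star_dotProduct_eq_zero (fun i => hne i i.is_le)
      fun i j hij => ?_
    rcases hij.lt_or_gt with hij | hij
    · exact hres i j hij
    · rw [← star_star (star (r i) ⬝ᵥ r j), star_dotProduct, star_star, hres j i hij, star_zero]
  have hspan : Submodule.span 𝕜 (Set.range fun i : Fin (M.rank + 1) => r i) ≤
      LinearMap.range M.mulVecLin :=
    Submodule.span_le.2 <| Set.range_subset_iff.2 fun i => h.residual_mem_range hb i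
  have := Submodule.finrank_mono hspan
  rw [finrank_span_eq_card hli, Fintype.card_fin] at this
  exact (M.rank.lt_succ_self).not_ge this

end IsConjugateGradient

theorem stmt_10 (K R : ℕ) (M : Matrix (Fin K) (Fin K) ℂ) (hM : M.PosSemidef)
    (hrank : M.rank = R)
    (b : Fin K → ℂ) (hb : ∃ v, M.mulVec v = b)
    (x r p : ℕ → (Fin K → ℂ)) (α β : ℕ → ℂ)
    (hx0 : x 0 = 0)
    (hr0 : r 0 = b)
    (hp0 : p 0 = r 0)
    (hα : ∀ k, α k = -(star (p k) ⬝ᵥ r k) / (star (p k) ⬝ᵥ M.mulVec (p k)))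
    (hx : ∀ k, x (k + 1) = x k + α k • p k)
    (hr : ∀ k, r (k + 1) = r k + α k • M.mulVec (p k))
    (hβ : ∀ k, β (k + 1) = -(star (M.mulVec (p k)) ⬝ᵥ r (k + 1)) / (star (p k) ⬝ᵥ M.mulVec (p k)))
    (hp : ∀ k, p (k + 1) = r (k + 1) + β (k + 1) • p k) :
    ∃ m ≤ R, M.mulVec (x m) + b = 0 := by
  have hcg : IsConjugateGradient M b x r p α β := ⟨hx0, hr0, hp0, hα, hx, hr, hβ, hp⟩
  obtain ⟨m, hm, hrm⟩ := hcg.exists_residual_eq_zero hM hb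
  exact ⟨m, hrank ▸ hm, hcg.residual_eq m ▸ hrm⟩
end
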